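/- arXiv:2107.03826 — 4 statements merged into one kernel-verified Lean document; each statement's English description precedes it below -/
import Mathlib

section
/- The smoothed loss ρ(x) = √(1+x²) is convex, continuously differentiable, its derivative ψ(x) = x/√(1+x²) is 1-Lipschitz, and ψ'(x) + ψ(x)² ≥ 23/27 for all x ∈ ℝ. -/
/-- The smoothed Huber loss `ρ(x) = √(1 + x²)`. -/
noncomputable def smoothLoss (x : ℝ) : ℝ := Real.sqrt (1 + x ^ 2)

/-- Its derivative `ψ(x) = x / √(1 + x²)`. -/
noncomputable def smoothLossDeriv (x : ℝ) : ℝ := x / Real.sqrt (1 + x ^ 2)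

/-!
Write `t = (1 + x²)^{-1/2} ∈ (0, 1]`. Then `ψ(x)² = 1 - t²` and `ψ'(x) = t³`, so `ψ' > 0` gives
convexity of `ρ`, `ψ' ≤ 1` gives the Lipschitz bound, and `ψ' + ψ² = 1 + t³ - t² ≥ 23/27` because
`t³ - t² + 4/27 = (t - 2/3)² (t + 1/3)`.
-/

lemma neg_four_div_twentySeven_le_pow_three_sub_sq {t : ℝ} (ht : -(1 / 3) ≤ t) :
    -(4 / 27) ≤ t ^ 3 - t ^ 2 := by
  nlinarith [mul_nonneg (sq_nonneg (t - 2 / 3)) (by linarith : (0 : ℝ) ≤ t + 1 / 3)]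

lemma one_le_sqrt_one_add_sq (x : ℝ) : 1 ≤ √(1 + x ^ 2) :=
  Real.one_le_sqrt.2 (le_add_of_nonneg_right (sq_nonneg x))

lemma sqrt_one_add_sq_pos (x : ℝ) : 0 < √(1 + x ^ 2) :=
  one_pos.trans_le (one_le_sqrt_one_add_sq x)

lemma sq_sqrt_one_add_sq (x : ℝ) : √(1 + x ^ 2) ^ 2 = 1 + x ^ 2 :=
  Real.sq_sqrt (by positivity)

lemma smoothLossDeriv_sq (x : ℝ) : smoothLossDeriv x ^ 2 = 1 - (√(1 + x ^ 2))⁻¹ ^ 2 := by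
  have hs := sqrt_one_add_sq_pos x
  rw [smoothLossDeriv, div_pow, inv_pow, sq_sqrt_one_add_sq]
  field_simp
  ring

lemma hasDerivAt_smoothLoss (x : ℝ) : HasDerivAt smoothLoss (smoothLossDeriv x) x := by
  refine (((hasDerivAt_pow 2 x).const_add 1).sqrt (by positivity)).congr_deriv ?_
  rw [smoothLossDeriv]
  field_simp
  ring

lemma hasDerivAt_smoothLossDeriv (x : ℝ) :
    HasDerivAt smoothLossDeriv ((√(1 + x ^ 2))⁻¹ ^ 3) x := by
  have hs := sqrt_one_add_sq_pos x
  refine ((hasDerivAt_id x).div (hasDerivAt_smoothLoss x) hs.ne').congr_deriv ?_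
  rw [smoothLoss, smoothLossDeriv, id]
  field_simp
  linear_combination sq_sqrt_one_add_sq x

lemma strictMono_smoothLossDeriv : StrictMono smoothLossDeriv :=
  strictMono_of_hasDerivAt_pos hasDerivAt_smoothLossDeriv fun x =>
    pow_pos (inv_pos.2 (sqrt_one_add_sq_pos x)) 3

lemma convexOn_smoothLoss : ConvexOn ℝ Set.univ smoothLoss := by
  have hderiv : deriv smoothLoss = smoothLossDeriv :=
    funext fun x => (hasDerivAt_smoothLoss x).deriv
  exact Monotone.convexOn_univ_of_deriv (fun x => (hasDerivAt_smoothLoss x).differentiableAt)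
    (hderiv ▸ strictMono_smoothLossDeriv.monotone)

lemma lipschitzWith_one_smoothLossDeriv : LipschitzWith 1 smoothLossDeriv := by
  refine lipschitzWith_of_nnnorm_deriv_le
    (fun x => (hasDerivAt_smoothLossDeriv x).differentiableAt) fun x => ?_
  have ht : (√(1 + x ^ 2))⁻¹ ≤ 1 := inv_le_one_of_one_le₀ (one_le_sqrt_one_add_sq x)
  rw [← NNReal.coe_le_coe, coe_nnnorm, NNReal.coe_one, (hasDerivAt_smoothLossDeriv x).deriv,
    Real.norm_eq_abs, abs_of_pos (pow_pos (inv_pos.2 (sqrt_one_add_sq_pos x)) 3)]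
  exact pow_le_one₀ (inv_nonneg.2 (sqrt_one_add_sq_pos x).le) ht

/-- `ρ(x) = √(1+x²)` is convex, continuously differentiable, its derivative
`ψ` is `1`-Lipschitz, and `ψ'(x) + ψ(x)² ≥ 23/27` for all `x`. -/
theorem stmt3 :
    ConvexOn ℝ Set.univ smoothLoss ∧
    (∀ x : ℝ, HasDerivAt smoothLoss (smoothLossDeriv x) x) ∧
    Continuous smoothLossDeriv ∧
    LipschitzWith 1 smoothLossDeriv ∧
    (∀ x : ℝ, deriv smoothLossDeriv x + smoothLossDeriv x ^ 2 ≥ 23 / 27) := by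
  refine ⟨convexOn_smoothLoss, hasDerivAt_smoothLoss,
    lipschitzWith_one_smoothLossDeriv.continuous, lipschitzWith_one_smoothLossDeriv, fun x => ?_⟩
  have ht : -(1 / 3) ≤ (√(1 + x ^ 2))⁻¹ := by
    linarith [inv_pos.2 (sqrt_one_add_sq_pos x)]
  rw [(hasDerivAt_smoothLossDeriv x).deriv, smoothLossDeriv_sq]
  linarith [neg_four_div_twentySeven_le_pow_three_sub_sq ht]
end

section
/- Let D ∈ ℝ^{n×n} be diagonal with entries in [0, L], X ∈ ℝ^{n×p}, and G ∈ ℝ^{p×p} symmetric positive definite with G ⪰ τ I_p for τ > 0. Define M = (Xᵀ D X + n G)^{-1}. Then ‖D X M‖_op ≤ (1/2) L^{1/2} (nτ)^{-1/2} and M ⪯ (nτ)^{-1} I_p. -/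
open Matrix

/-- Euclidean norm of a vector in `ℝ^n`. -/
noncomputable def euclNorm {n : ℕ} (v : Fin n → ℝ) : ℝ := Real.sqrt (∑ i, v i ^ 2)

/-- Loewner order: `A ⪯ B` iff `B - A` is positive semidefinite. -/
def LoewnerLE {p : ℕ} (A B : Matrix (Fin p) (Fin p) ℝ) : Prop := (B - A).PosSemidef

/-!
Write `c = nτ`, `A = XᵀDX + nG` and `y = Mx`, so that `Ay = x`. Since `nG ⪰ cI`,
`yᵀXᵀDXy + c‖y‖² ≤ yᵀAy = xᵀy`, and `‖x - 2cy‖² ≥ 0` turns this into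
`4c · yᵀXᵀDXy ≤ ‖x‖²`; as `0 ≤ D ≤ L`, `‖DXy‖² ≤ L · yᵀXᵀDXy`, which gives the operator-norm
bound. Likewise `c‖y‖² ≤ xᵀy` and `‖x - cy‖² ≥ 0` give `c · xᵀMx ≤ ‖x‖²`, i.e. `M ⪯ c⁻¹I`.
-/

section Loewner

variable {ι : Type*}

lemma posDef_of_posSemidef_sub_smul_one [DecidableEq ι] {A : Matrix ι ι ℝ} {c : ℝ} (hc : 0 < c)
    (h : (A - c • 1).PosSemidef) : A.PosDef := by
  simpa using PosDef.posSemidef_add h (PosDef.one.smul hc)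

variable [Fintype ι]

lemma dotProduct_mulVec_le_of_posSemidef_sub {A B : Matrix ι ι ℝ} (h : (A - B).PosSemidef)
    (y : ι → ℝ) : y ⬝ᵥ B *ᵥ y ≤ y ⬝ᵥ A *ᵥ y := by
  have := h.dotProduct_mulVec_nonneg y
  rwa [star_trivial, sub_mulVec, dotProduct_sub, sub_nonneg] at this

lemma two_mul_dotProduct_le (x y : ι → ℝ) (t : ℝ) :
    2 * t * (x ⬝ᵥ y) ≤ x ⬝ᵥ x + t ^ 2 * (y ⬝ᵥ y) := by
  have := dotProduct_star_self_nonneg (x - t • y)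
  simp only [star_trivial, sub_dotProduct, dotProduct_sub, smul_dotProduct, dotProduct_smul,
    smul_eq_mul, dotProduct_comm y x] at this
  linear_combination this

lemma four_mul_dotProduct_mulVec_le [DecidableEq ι] {A S : Matrix ι ι ℝ} {c : ℝ} (hc : 0 < c)
    (h : (A - S - c • 1).PosSemidef) (y : ι → ℝ) :
    4 * c * (y ⬝ᵥ S *ᵥ y) ≤ (A *ᵥ y) ⬝ᵥ (A *ᵥ y) := by
  have hSA : y ⬝ᵥ S *ᵥ y + c * (y ⬝ᵥ y) ≤ (A *ᵥ y) ⬝ᵥ y := by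
    have := dotProduct_mulVec_le_of_posSemidef_sub (B := S + c • 1) (by rwa [← sub_sub]) y
    rwa [add_mulVec, dotProduct_add, smul_mulVec, one_mulVec, dotProduct_smul, smul_eq_mul,
      dotProduct_comm y (A *ᵥ y)] at this
  have := two_mul_dotProduct_le (A *ᵥ y) y (2 * c)
  nlinarith [mul_le_mul_of_nonneg_left hSA (by positivity : (0 : ℝ) ≤ 4 * c)]

lemma posSemidef_inv_smul_one_sub_inv [DecidableEq ι] {A : Matrix ι ι ℝ} {c : ℝ} (hc : 0 < c)
    (h : (A - c • 1).PosSemidef) : (c⁻¹ • 1 - A⁻¹).PosSemidef := by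
  have hA := posDef_of_posSemidef_sub_smul_one hc h
  refine .of_dotProduct_mulVec_nonneg
    ((isHermitian_one.smul (IsSelfAdjoint.all _)).sub hA.inv.isHermitian) fun x => ?_
  set y := A⁻¹ *ᵥ x
  have hAy : A *ᵥ y = x := by
    rw [mulVec_mulVec, mul_nonsing_inv _ ((isUnit_iff_isUnit_det A).mp hA.isUnit), one_mulVec]
  have hxy : c * (y ⬝ᵥ y) ≤ x ⬝ᵥ y := by
    have := dotProduct_mulVec_le_of_posSemidef_sub h y
    rwa [smul_mulVec, one_mulVec, dotProduct_smul, smul_eq_mul, hAy, dotProduct_comm y x] at this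
  have := two_mul_dotProduct_le x y c
  rw [star_trivial, sub_mulVec, dotProduct_sub, smul_mulVec, one_mulVec, dotProduct_smul,
    smul_eq_mul, sub_nonneg, le_inv_mul_iff₀ hc]
  nlinarith [mul_le_mul_of_nonneg_left hxy hc.le]

end Loewner

lemma euclNorm_sq {n : ℕ} (v : Fin n → ℝ) : euclNorm v ^ 2 = v ⬝ᵥ v := by
  rw [euclNorm, Real.sq_sqrt (by positivity)]
  simp only [dotProduct, sq]

lemma euclNorm_diagonal_mulVec_sq_le {n : ℕ} {d : Fin n → ℝ} {L : ℝ}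
    (hd : ∀ i, 0 ≤ d i ∧ d i ≤ L) (v : Fin n → ℝ) :
    euclNorm (diagonal d *ᵥ v) ^ 2 ≤ L * (v ⬝ᵥ diagonal d *ᵥ v) := by
  rw [euclNorm_sq]
  simp only [dotProduct, mulVec_diagonal, Finset.mul_sum]
  refine Finset.sum_le_sum fun i _ => ?_
  nlinarith [mul_le_mul_of_nonneg_right (hd i).2 (mul_nonneg (hd i).1 (sq_nonneg (v i)))]

lemma dotProduct_transpose_mul_mul_mulVec {m n : Type*} [Fintype m] [Fintype n]
    (X : Matrix m n ℝ) (D : Matrix m m ℝ) (y : n → ℝ) :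
    y ⬝ᵥ (Xᵀ * D * X) *ᵥ y = (X *ᵥ y) ⬝ᵥ D *ᵥ (X *ᵥ y) := by
  rw [← mulVec_mulVec, ← mulVec_mulVec, dotProduct_mulVec, vecMul_transpose]

lemma euclNorm_diagonal_mul_mul_inv_mulVec_sq_le {n p : ℕ} {d : Fin n → ℝ} {L c : ℝ}
    (hd : ∀ i, 0 ≤ d i ∧ d i ≤ L) (hL : 0 ≤ L) (hc : 0 < c) {X : Matrix (Fin n) (Fin p) ℝ}
    {A : Matrix (Fin p) (Fin p) ℝ} (hA : (A - Xᵀ * diagonal d * X - c • 1).PosSemidef)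
    (hdet : IsUnit A.det) (x : Fin p → ℝ) :
    euclNorm ((diagonal d * X * A⁻¹) *ᵥ x) ^ 2 ≤ L / (4 * c) * (x ⬝ᵥ x) := by
  set y := A⁻¹ *ᵥ x
  have hAy : A *ᵥ y = x := by rw [mulVec_mulVec, mul_nonsing_inv _ hdet, one_mulVec]
  have hquad : y ⬝ᵥ (Xᵀ * diagonal d * X) *ᵥ y ≤ (x ⬝ᵥ x) / (4 * c) := by
    rw [le_div_iff₀' (by positivity), ← hAy]
    exact four_mul_dotProduct_mulVec_le hc hA y
  calc euclNorm ((diagonal d * X * A⁻¹) *ᵥ x) ^ 2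
      = euclNorm (diagonal d *ᵥ (X *ᵥ y)) ^ 2 := by simp only [y, mulVec_mulVec, Matrix.mul_assoc]
    _ ≤ L * (y ⬝ᵥ (Xᵀ * diagonal d * X) *ᵥ y) := by
      rw [dotProduct_transpose_mul_mul_mulVec]
      exact euclNorm_diagonal_mulVec_sq_le hd _
    _ ≤ L / (4 * c) * (x ⬝ᵥ x) := by
      rw [div_mul_comm, mul_comm _ L]
      exact mul_le_mul_of_nonneg_left hquad hL

theorem stmt6_general {n p : ℕ} (hn : 0 < n) (L τ : ℝ) (hL : 0 < L) (hτ : 0 < τ)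
    (d : Fin n → ℝ) (hd : ∀ i, 0 ≤ d i ∧ d i ≤ L)
    (X : Matrix (Fin n) (Fin p) ℝ) (G : Matrix (Fin p) (Fin p) ℝ)
    (hGτ : LoewnerLE (τ • (1 : Matrix (Fin p) (Fin p) ℝ)) G)
    (M : Matrix (Fin p) (Fin p) ℝ)
    (hM : M = (Xᵀ * Matrix.diagonal d * X + (n : ℝ) • G)⁻¹) :
    (∀ x : Fin p → ℝ,
        euclNorm ((Matrix.diagonal d * X * M).mulVec x)
          ≤ (1 / 2) * Real.sqrt L * (Real.sqrt ((n : ℝ) * τ))⁻¹ * euclNorm x) ∧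
    LoewnerLE M (((n : ℝ) * τ)⁻¹ • (1 : Matrix (Fin p) (Fin p) ℝ)) := by
  set c := (n : ℝ) * τ
  have hc : 0 < c := by positivity
  set S := Xᵀ * diagonal d * X
  have hS : S.PosSemidef := by
    simpa using (posSemidef_diagonal_iff.mpr fun i => (hd i).1).conjTranspose_mul_mul_same X
  have hAS : (S + (n : ℝ) • G - S - c • 1).PosSemidef := by
    rw [add_sub_cancel_left, mul_smul, ← smul_sub]
    exact hGτ.smul (Nat.cast_nonneg n)
  have hAc : (S + (n : ℝ) • G - c • 1).PosSemidef := by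
    simpa only [add_sub_cancel, add_sub_assoc] using hS.add hAS
  have hdet := (isUnit_iff_isUnit_det _).mp (posDef_of_posSemidef_sub_smul_one hc hAc).isUnit
  subst hM
  refine ⟨fun x => le_of_pow_le_pow_left₀ two_ne_zero
    (mul_nonneg (by positivity) (Real.sqrt_nonneg _)) ?_,
    posSemidef_inv_smul_one_sub_inv hc hAc⟩
  calc _ ≤ L / (4 * c) * (x ⬝ᵥ x) :=
        euclNorm_diagonal_mul_mul_inv_mulVec_sq_le hd hL.le hc hAS hdet x
    _ = _ := by
      rw [mul_pow, mul_pow, mul_pow, inv_pow, Real.sq_sqrt hL.le, Real.sq_sqrt hc.le, euclNorm_sq]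
      ring

/-- With `D` diagonal with entries in `[0, L]`, `G ⪰ τ I` symmetric positive definite and
`M = (XᵀDX + nG)⁻¹`, one has `‖DXM‖_op ≤ (1/2) L^{1/2} (nτ)^{-1/2}` and
`M ⪯ (nτ)⁻¹ I`. -/
theorem stmt6 {n p : ℕ} (hn : 0 < n) (L τ : ℝ) (hL : 0 < L) (hτ : 0 < τ)
    (d : Fin n → ℝ) (hd : ∀ i, 0 ≤ d i ∧ d i ≤ L)
    (X : Matrix (Fin n) (Fin p) ℝ) (G : Matrix (Fin p) (Fin p) ℝ)
    (hGsym : G.IsSymm) (hGpd : G.PosDef)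
    (hGτ : LoewnerLE (τ • (1 : Matrix (Fin p) (Fin p) ℝ)) G)
    (M : Matrix (Fin p) (Fin p) ℝ)
    (hM : M = (Xᵀ * Matrix.diagonal d * X + (n : ℝ) • G)⁻¹) :
    (∀ x : Fin p → ℝ,
        euclNorm ((Matrix.diagonal d * X * M).mulVec x)
          ≤ (1 / 2) * Real.sqrt L * (Real.sqrt ((n : ℝ) * τ))⁻¹ * euclNorm x) ∧
    LoewnerLE M (((n : ℝ) * τ)⁻¹ • (1 : Matrix (Fin p) (Fin p) ℝ)) :=
  stmt6_general hn L τ hL hτ d hd X G hGτ M hM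
end

section
/- Let ρ : ℝ → ℝ be convex C¹ with L-Lipschitz derivative ψ, and let g, g̃ : ℝ^p → ℝ be strongly convex with parameters τ, τ̃ ≥ 0 respectively with τ + τ̃ > 0. Fix y ∈ ℝ^n, X ∈ ℝ^{n×p} and set β̂ = argmin_b (1/n)Σᵢ ρ(yᵢ - xᵢᵀb) + g(b) and β̃ = argmin_b (1/n)Σᵢ ρ(yᵢ - xᵢᵀb) + g̃(b), with ψ̂ = ψ(y - Xβ̂) and ψ̃ = ψ(y - Xβ̃) applied componentwise. Then ((τ + τ̃)/2)‖β̃ - β̂‖₂² + (nL)^{-1}‖ψ̂ - ψ̃‖₂² ≤ 2 sup_{x∈ℝ^p} |g(x) - g̃(x)|. -/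
open Matrix Set Filter Topology

/-!
Each minimizer satisfies a quadratic growth bound: for every `b`, the objective at `b` exceeds
its value at the minimizer `β̂` by at least `τ/2 ‖b - β̂‖² + (2nL)⁻¹ ‖ψ(y - Xβ̂) - ψ(y - Xb)‖²`.
The first term comes from strong convexity of the penalty through first-order optimality along
the segment `[β̂, b]`; the second from co-coercivity of the derivative of a convex function with
`L`-Lipschitz derivative, `(ψ b - ψ a)² / (2L) ≤ ρ b - ρ a - ψ a (b - a)`. Adding the bounds for
`(g, β̂, b = β̃)` and `(g̃, β̃, b = β̂)`, the data-fit terms cancel and what is left is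
`(g - g̃)(β̃) - (g - g̃)(β̂) ≤ 2 sup |g - g̃|`.
-/

theorem apply_le_of_hasDerivAt_mul_sub_nonpos {f f' : ℝ → ℝ} {a : ℝ}
    (hf : ∀ x, HasDerivAt f (f' x) x) (hf' : ∀ x, f' x * (x - a) ≤ 0) (b : ℝ) :
    f b ≤ f a := by
  have hcont : Continuous f := continuous_iff_continuousAt.2 fun x => (hf x).continuousAt
  rcases le_total a b with hab | hba
  · refine antitoneOn_of_hasDerivWithinAt_nonpos (convex_Ici a) hcont.continuousOn
      (fun x _ => (hf x).hasDerivWithinAt) (fun x hx => ?_) self_mem_Ici hab hab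
    rw [interior_Ici] at hx
    exact nonpos_of_mul_nonpos_left (hf' x) (sub_pos.2 hx)
  · refine monotoneOn_of_hasDerivWithinAt_nonneg (convex_Iic a) hcont.continuousOn
      (fun x _ => (hf x).hasDerivWithinAt) (fun x hx => ?_) hba self_mem_Iic hba
    rw [interior_Iic] at hx
    nlinarith [hf' x, mem_Iio.1 hx]

variable {ρ ψ : ℝ → ℝ} {L : NNReal}

theorem ConvexOn.add_mul_sub_le_of_hasDerivAt (hρ : ConvexOn ℝ univ ρ)
    (hρψ : ∀ x, HasDerivAt ρ (ψ x) x) (a b : ℝ) : ρ a + ψ a * (b - a) ≤ ρ b := by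
  have hψmono : Monotone ψ := fun x y hxy => by
    simpa only [(hρψ _).deriv] using
      hρ.monotoneOn_deriv (fun x _ => (hρψ x).differentiableAt) trivial trivial hxy
  have := apply_le_of_hasDerivAt_mul_sub_nonpos
    (f := fun x => ψ a * x - ρ x) (f' := fun x => ψ a - ψ x) (a := a)
    (fun x => ((hasDerivAt_id x).const_mul (ψ a)).sub (hρψ x) |>.congr_deriv (by simp))
    (fun x => ?_) b
  · linarith
  rcases le_total x a with hxa | hax
  · nlinarith [hψmono hxa]
  · nlinarith [hψmono hax]

theorem le_add_mul_sub_add_sq_of_lipschitzWith (hρψ : ∀ x, HasDerivAt ρ (ψ x) x)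
    (hψ : LipschitzWith L ψ) (a b : ℝ) :
    ρ b ≤ ρ a + ψ a * (b - a) + L / 2 * (b - a) ^ 2 := by
  have := apply_le_of_hasDerivAt_mul_sub_nonpos
    (f := fun x => ρ x - ψ a * x - L / 2 * (x - a) ^ 2) (f' := fun x => ψ x - ψ a - L * (x - a))
    (a := a)
    (fun x => ((hρψ x).sub ((hasDerivAt_id x).const_mul (ψ a))).sub
      ((((hasDerivAt_id x).sub_const a).pow 2).const_mul _) |>.congr_deriv (by simp; ring))
    (fun x => ?_) b
  · linarith
  have hlip : |ψ x - ψ a| ≤ L * |x - a| := by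
    simpa only [Real.dist_eq] using hψ.dist_le_mul x a
  have := mul_le_mul_of_nonneg_right hlip (abs_nonneg (x - a))
  rw [mul_assoc, ← abs_mul, ← abs_mul, abs_mul_self] at this
  nlinarith [le_abs_self ((ψ x - ψ a) * (x - a))]

theorem ConvexOn.sq_sub_div_le_of_lipschitzWith (hρ : ConvexOn ℝ univ ρ)
    (hρψ : ∀ x, HasDerivAt ρ (ψ x) x) (hψ : LipschitzWith L ψ) (hL : (0 : ℝ) < L) (a b : ℝ) :
    (ψ b - ψ a) ^ 2 / (2 * L) ≤ ρ b - ρ a - ψ a * (b - a) := by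
  -- compare the tangent at `a` with the descent bound at `b`, both evaluated at the gradient step
  set c := b - (ψ b - ψ a) / L
  have htangent := hρ.add_mul_sub_le_of_hasDerivAt hρψ a c
  have hdescent := le_add_mul_sub_add_sq_of_lipschitzWith hρψ hψ b c
  have hstep : ψ a * (c - a) - ψ b * (c - b) - L / 2 * (c - b) ^ 2
      = ψ a * (b - a) + (ψ b - ψ a) ^ 2 / (2 * L) := by
    simp only [c]; field_simp; ring
  linarith

theorem nonneg_of_forall_mem_Ioc_nonneg_add_mul {A C : ℝ}
    (h : ∀ t ∈ Ioc (0 : ℝ) 1, 0 ≤ A + t * C) : 0 ≤ A := by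
  have hlim : Tendsto (fun t => A + t * C) (𝓝[>] 0) (𝓝 A) := by
    have : Continuous fun t : ℝ => A + t * C := by fun_prop
    simpa using (this.tendsto 0).mono_left nhdsWithin_le_nhds
  exact ge_of_tendsto hlim (eventually_of_mem (Ioc_mem_nhdsGT one_pos) h)

variable {ι κ : Type*} [Fintype ι] [Fintype κ]

theorem sum_sq_add_smul_sub (x y : ι → ℝ) (t : ℝ) :
    ∑ j, (x + t • (y - x)) j ^ 2
      = (1 - t) * ∑ j, x j ^ 2 + t * ∑ j, y j ^ 2 - t * (1 - t) * ∑ j, (y j - x j) ^ 2 := by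
  simp only [Finset.mul_sum, ← Finset.sum_add_distrib, ← Finset.sum_sub_distrib]
  refine Finset.sum_congr rfl fun j _ => ?_
  simp only [Pi.add_apply, Pi.smul_apply, Pi.sub_apply, smul_eq_mul]
  ring

theorem ConvexOn.apply_add_smul_sub_le_of_sub_sum_sq {g : (ι → ℝ) → ℝ} {τ : ℝ}
    (hg : ConvexOn ℝ univ fun b => g b - τ / 2 * ∑ j, b j ^ 2) (x y : ι → ℝ) {t : ℝ}
    (ht₀ : 0 ≤ t) (ht₁ : t ≤ 1) :
    g (x + t • (y - x))
      ≤ (1 - t) * g x + t * g y - τ / 2 * t * (1 - t) * ∑ j, (y j - x j) ^ 2 := by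
  have hcomb : x + t • (y - x) = (1 - t) • x + t • y := by
    rw [smul_sub, sub_smul, one_smul]; abel
  have := hg.2 (mem_univ x) (mem_univ y) (sub_nonneg.2 ht₁) ht₀ (sub_add_cancel 1 t)
  rw [← hcomb] at this
  simp only [smul_eq_mul, sum_sq_add_smul_sub] at this
  linear_combination this

def penalizedLoss (ρ : ℝ → ℝ) (g : (κ → ℝ) → ℝ) (c : ℝ) (y : ι → ℝ) (X : Matrix ι κ ℝ)
    (b : κ → ℝ) : ℝ :=
  c * ∑ i, ρ (y i - (X *ᵥ b) i) + g b

theorem sum_apply_sub_mulVec_add_smul_le (hρψ : ∀ x, HasDerivAt ρ (ψ x) x)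
    (hψ : LipschitzWith L ψ) (y : ι → ℝ) (X : Matrix ι κ ℝ) (β v : κ → ℝ) (t : ℝ) :
    ∑ i, ρ (y i - (X *ᵥ (β + t • v)) i)
      ≤ ∑ i, ρ (y i - (X *ᵥ β) i) - t * ∑ i, ψ (y i - (X *ᵥ β) i) * (X *ᵥ v) i
        + L / 2 * t ^ 2 * ∑ i, (X *ᵥ v) i ^ 2 := by
  calc ∑ i, ρ (y i - (X *ᵥ (β + t • v)) i)
      ≤ ∑ i, (ρ (y i - (X *ᵥ β) i) - t * (ψ (y i - (X *ᵥ β) i) * (X *ᵥ v) i)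
          + L / 2 * t ^ 2 * (X *ᵥ v) i ^ 2) := Finset.sum_le_sum fun i _ => by
        have := le_add_mul_sub_add_sq_of_lipschitzWith hρψ hψ (y i - (X *ᵥ β) i)
          (y i - (X *ᵥ (β + t • v)) i)
        simp only [mulVec_add, mulVec_smul, Pi.add_apply, Pi.smul_apply,
          smul_eq_mul] at this ⊢
        linear_combination this
    _ = _ := by simp only [Finset.mul_sum, Finset.sum_add_distrib, Finset.sum_sub_distrib]

theorem le_penalty_of_minimizer (hρψ : ∀ x, HasDerivAt ρ (ψ x) x) (hψ : LipschitzWith L ψ)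
    {g : (κ → ℝ) → ℝ} {τ : ℝ} (hg : ConvexOn ℝ univ fun b => g b - τ / 2 * ∑ j, b j ^ 2)
    (y : ι → ℝ) (X : Matrix ι κ ℝ) {c : ℝ} (hc : 0 ≤ c) {β : κ → ℝ}
    (hβ : ∀ b, penalizedLoss ρ g c y X β ≤ penalizedLoss ρ g c y X b) (b : κ → ℝ) :
    g β + c * ∑ i, ψ (y i - (X *ᵥ β) i) * (X *ᵥ (b - β)) i + τ / 2 * ∑ j, (b j - β j) ^ 2
      ≤ g b := by
  set P := c * ∑ i, ψ (y i - (X *ᵥ β) i) * (X *ᵥ (b - β)) i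
  suffices 0 ≤ g b - g β - P - τ / 2 * ∑ j, (b j - β j) ^ 2 by linarith
  -- minimality of `β` against `β + t • (b - β)`, divided by `t`, as `t → 0⁺`
  refine nonneg_of_forall_mem_Ioc_nonneg_add_mul
    (C := c * (L / 2 * ∑ i, (X *ᵥ (b - β)) i ^ 2) + τ / 2 * ∑ j, (b j - β j) ^ 2)
    fun t ht => nonneg_of_mul_nonneg_right ?_ ht.1
  have hmin := hβ (β + t • (b - β))
  have hloss := mul_le_mul_of_nonneg_left
    (sum_apply_sub_mulVec_add_smul_le hρψ hψ y X β (b - β) t) hc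
  have hpen := hg.apply_add_smul_sub_le_of_sub_sum_sq β b ht.1.le ht.2
  unfold penalizedLoss at hmin
  linear_combination hmin + hloss + hpen

theorem penalizedLoss_add_le_of_minimizer (hρ : ConvexOn ℝ univ ρ)
    (hρψ : ∀ x, HasDerivAt ρ (ψ x) x) (hψ : LipschitzWith L ψ) (hL : (0 : ℝ) < L)
    {g : (κ → ℝ) → ℝ} {τ : ℝ} (hg : ConvexOn ℝ univ fun b => g b - τ / 2 * ∑ j, b j ^ 2)
    (y : ι → ℝ) (X : Matrix ι κ ℝ) {c : ℝ} (hc : 0 ≤ c) {β : κ → ℝ}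
    (hβ : ∀ b, penalizedLoss ρ g c y X β ≤ penalizedLoss ρ g c y X b) (b : κ → ℝ) :
    penalizedLoss ρ g c y X β + τ / 2 * ∑ j, (b j - β j) ^ 2
        + c / (2 * L) * ∑ i, (ψ (y i - (X *ᵥ β) i) - ψ (y i - (X *ᵥ b) i)) ^ 2
      ≤ penalizedLoss ρ g c y X b := by
  have hpen := le_penalty_of_minimizer hρψ hψ hg y X hc hβ b
  have hloss : ∑ i, (ψ (y i - (X *ᵥ β) i) - ψ (y i - (X *ᵥ b) i)) ^ 2 / (2 * L)
      ≤ ∑ i, (ρ (y i - (X *ᵥ b) i) - ρ (y i - (X *ᵥ β) i)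
          + ψ (y i - (X *ᵥ β) i) * (X *ᵥ (b - β)) i) := Finset.sum_le_sum fun i _ => by
    have := hρ.sq_sub_div_le_of_lipschitzWith hρψ hψ hL (y i - (X *ᵥ β) i) (y i - (X *ᵥ b) i)
    rw [mulVec_sub, Pi.sub_apply]
    linear_combination this
  simp only [← Finset.sum_div, Finset.sum_add_distrib, Finset.sum_sub_distrib] at hloss
  unfold penalizedLoss
  linear_combination hpen + mul_le_mul_of_nonneg_left hloss hc

theorem stmt16_general {n p : ℕ}
    (ρ ψ : ℝ → ℝ) (L : NNReal) (hL : (0 : ℝ) < L)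
    (hρconv : ConvexOn ℝ Set.univ ρ)
    (hρderiv : ∀ x, HasDerivAt ρ (ψ x) x)
    (hψlip : LipschitzWith L ψ)
    (g gt : (Fin p → ℝ) → ℝ) (τ τt : ℝ)
    (hgconv : ConvexOn ℝ Set.univ (fun b => g b - τ / 2 * ∑ j, b j ^ 2))
    (hgtconv : ConvexOn ℝ Set.univ (fun b => gt b - τt / 2 * ∑ j, b j ^ 2))
    (y : Fin n → ℝ) (X : Matrix (Fin n) (Fin p) ℝ)
    (βh βt : Fin p → ℝ)
    (hβh : ∀ b : Fin p → ℝ,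
      (1 / (n : ℝ)) * (∑ i, ρ (y i - X.mulVec βh i)) + g βh
        ≤ (1 / (n : ℝ)) * (∑ i, ρ (y i - X.mulVec b i)) + g b)
    (hβt : ∀ b : Fin p → ℝ,
      (1 / (n : ℝ)) * (∑ i, ρ (y i - X.mulVec βt i)) + gt βt
        ≤ (1 / (n : ℝ)) * (∑ i, ρ (y i - X.mulVec b i)) + gt b)
    (S : ℝ) (hS : ∀ x : Fin p → ℝ, |g x - gt x| ≤ S) :
    (τ + τt) / 2 * (∑ j, (βt j - βh j) ^ 2)
      + ((n : ℝ) * L)⁻¹ * (∑ i, (ψ (y i - X.mulVec βh i) - ψ (y i - X.mulVec βt i)) ^ 2)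
      ≤ 2 * S := by
  have hweight : (0 : ℝ) ≤ 1 / n := by positivity
  have hgrowth :=
    penalizedLoss_add_le_of_minimizer hρconv hρderiv hψlip hL hgconv y X hweight hβh βt
  have hgrowth' :=
    penalizedLoss_add_le_of_minimizer hρconv hρderiv hψlip hL hgtconv y X hweight hβt βh
  have hsqβ : ∑ j, (βh j - βt j) ^ 2 = ∑ j, (βt j - βh j) ^ 2 :=
    Finset.sum_congr rfl fun j _ => by ring
  have hsqψ : ∑ i, (ψ (y i - X.mulVec βt i) - ψ (y i - X.mulVec βh i)) ^ 2
      = ∑ i, (ψ (y i - X.mulVec βh i) - ψ (y i - X.mulVec βt i)) ^ 2 :=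
    Finset.sum_congr rfl fun i _ => by ring
  rw [hsqβ, hsqψ] at hgrowth'
  unfold penalizedLoss at hgrowth hgrowth'
  linear_combination hgrowth + hgrowth' + (abs_le.mp (hS βt)).2 + (abs_le.mp (hS βh)).1

/-- Stability of the regularized M-estimator with respect to perturbation of the
penalty: `((τ+τ̃)/2)‖β̃-β̂‖² + (nL)⁻¹‖ψ̂-ψ̃‖² ≤ 2 sup|g - g̃|`. -/
theorem stmt16 {n p : ℕ} (hn : 0 < n)
    (ρ ψ : ℝ → ℝ) (L : NNReal) (hL : (0 : ℝ) < L)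
    (hρconv : ConvexOn ℝ Set.univ ρ)
    (hρderiv : ∀ x, HasDerivAt ρ (ψ x) x)
    (hψlip : LipschitzWith L ψ)
    (g gt : (Fin p → ℝ) → ℝ) (τ τt : ℝ) (hτ : 0 ≤ τ) (hτt : 0 ≤ τt)
    (hττt : 0 < τ + τt)
    (hgconv : ConvexOn ℝ Set.univ (fun b => g b - τ / 2 * ∑ j, b j ^ 2))
    (hgtconv : ConvexOn ℝ Set.univ (fun b => gt b - τt / 2 * ∑ j, b j ^ 2))
    (y : Fin n → ℝ) (X : Matrix (Fin n) (Fin p) ℝ)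
    (βh βt : Fin p → ℝ)
    (hβh : ∀ b : Fin p → ℝ,
      (1 / (n : ℝ)) * (∑ i, ρ (y i - X.mulVec βh i)) + g βh
        ≤ (1 / (n : ℝ)) * (∑ i, ρ (y i - X.mulVec b i)) + g b)
    (hβt : ∀ b : Fin p → ℝ,
      (1 / (n : ℝ)) * (∑ i, ρ (y i - X.mulVec βt i)) + gt βt
        ≤ (1 / (n : ℝ)) * (∑ i, ρ (y i - X.mulVec b i)) + gt b)
    (S : ℝ) (hS : ∀ x : Fin p → ℝ, |g x - gt x| ≤ S) :
    (τ + τt) / 2 * (∑ j, (βt j - βh j) ^ 2)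
      + ((n : ℝ) * L)⁻¹ * (∑ i, (ψ (y i - X.mulVec βh i) - ψ (y i - X.mulVec βt i)) ^ 2)
      ≤ 2 * S :=
  stmt16_general ρ ψ L hL hρconv hρderiv hψlip g gt τ τt hgconv hgtconv y X βh βt hβh hβt S hS
end

section
/- Let ρ : ℝ → ℝ be convex C¹ with L-Lipschitz derivative ψ, and g : ℝ^p → ℝ be τ-strongly convex with τ > 0. For ε ∈ ℝ^n and X ∈ ℝ^{n×p}, define β̂(ε, X) = argmin_b (1/n)Σᵢ ρ(εᵢ - xᵢᵀ(b - β)) + g(b), h(ε, X) = β̂(ε, X) - β, and ψ̂(ε, X) = ψ(ε - X h(ε, X)) componentwise, where β ∈ ℝ^p is fixed. Then for any (ε, X) and (ε̃, X̃): nτ‖h - h̃‖₂² + L^{-1}‖ψ̂ - ψ̃‖₂² ≤ (h - h̃)ᵀ(X - X̃)ᵀψ̂ + (ε - ε̃ + X̃h - Xh)ᵀ(ψ̂ - ψ̃), where h = h(ε,X), h̃ = h(ε̃,X̃), ψ̂ = ψ̂(ε,X), ψ̃ = ψ̂(ε̃,X̃). -/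
/-!
Testing the first-order optimality condition of `β̂ = β + h` against the competitor `β + h̃`, and
using the `τ`-strong convexity of `g`, gives
`g (β + h̃) ≥ g (β + h) + n⁻¹ ⟪X (h̃ - h), ψ̂⟫ + τ/2 ‖h̃ - h‖²`.
Adding this to its mirror image bounds `nτ ‖h - h̃‖²` by `-⟪X (h̃ - h), ψ̂⟫ - ⟪X̃ (h - h̃), ψ̃⟫`.
Since `ψ = ρ'` is monotone and `L`-Lipschitz it is co-coercive,
`L⁻¹ (ψ a - ψ b)² ≤ (ψ a - ψ b) (a - b)`; applied to the residuals `ε - X h` and `ε̃ - X̃ h̃`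
this bounds the second term, and the two right-hand sides add up to the claimed one.
-/

open Matrix Set

theorem ConvexOn.monotone_of_hasDerivAt {ρ ψ : ℝ → ℝ} (hρ : ConvexOn ℝ univ ρ)
    (hψ : ∀ x, HasDerivAt ρ (ψ x) x) : Monotone ψ := by
  intro a b hab
  rcases hab.eq_or_lt with rfl | hab
  · rfl
  exact (hρ.le_slope_of_hasDerivAt trivial trivial hab (hψ a)).trans
    (hρ.slope_le_of_hasDerivAt trivial trivial hab (hψ b))

theorem LipschitzWith.inv_mul_sq_sub_le_of_monotone {ψ : ℝ → ℝ} {L : NNReal}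
    (hlip : LipschitzWith L ψ) (hmono : Monotone ψ) (a b : ℝ) :
    (L : ℝ)⁻¹ * (ψ a - ψ b) ^ 2 ≤ (ψ a - ψ b) * (a - b) := by
  have hsign : (ψ a - ψ b) * (a - b) = |ψ a - ψ b| * |a - b| := by
    rcases le_total b a with hba | hab
    · rw [abs_of_nonneg (sub_nonneg.2 (hmono hba)), abs_of_nonneg (sub_nonneg.2 hba)]
    · rw [abs_of_nonpos (sub_nonpos.2 (hmono hab)), abs_of_nonpos (sub_nonpos.2 hab)]
      ring
  have hdist : |ψ a - ψ b| ≤ L * |a - b| := by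
    simpa only [Real.dist_eq] using hlip.dist_le_mul a b
  rcases L.coe_nonneg.eq_or_lt with hL | hL
  · rw [← hL, _root_.inv_zero, zero_mul, hsign]
    positivity
  calc (L : ℝ)⁻¹ * (ψ a - ψ b) ^ 2 = (L : ℝ)⁻¹ * |ψ a - ψ b| * |ψ a - ψ b| := by
        rw [mul_assoc, abs_mul_abs_self, sq]
    _ ≤ (L : ℝ)⁻¹ * |ψ a - ψ b| * (L * |a - b|) := by gcongr
    _ = (ψ a - ψ b) * (a - b) := by rw [hsign]; field_simp

theorem LipschitzWith.inv_mul_sum_sq_sub_le_of_monotone {ι : Type*} [Fintype ι] {ψ : ℝ → ℝ}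
    {L : NNReal} (hlip : LipschitzWith L ψ) (hmono : Monotone ψ) (a b : ι → ℝ) :
    (L : ℝ)⁻¹ * ∑ i, (ψ (a i) - ψ (b i)) ^ 2 ≤ ∑ i, (ψ (a i) - ψ (b i)) * (a i - b i) := by
  rw [Finset.mul_sum]
  exact Finset.sum_le_sum fun i _ => hlip.inv_mul_sq_sub_le_of_monotone hmono (a i) (b i)

/-- On the segment from `x` to `x + d`, `G` lies below its chord, so the difference quotients of `f`
along `d` stay above `G x - G (x + d)`. -/
theorem HasLineDerivAt.sub_le_of_isMinOn_add {E : Type*} [AddCommGroup E] [Module ℝ E]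
    {f G : E → ℝ} {f' : ℝ} {x d : E} (hf : HasLineDerivAt ℝ f f' x d)
    (hG : ConvexOn ℝ univ G) (hmin : IsMinOn (f + G) univ x) :
    G x - G (x + d) ≤ f' := by
  refine ge_of_tendsto hf.tendsto_slope_zero_right ?_
  filter_upwards [Ioc_mem_nhdsGT (zero_lt_one' ℝ)] with t ⟨ht0, ht1⟩
  have hchord : G (x + t • d) ≤ (1 - t) * G x + t * G (x + d) := by
    have := hG.2 (mem_univ x) (mem_univ (x + d)) (sub_nonneg.2 ht1) ht0.le (sub_add_cancel 1 t)
    rwa [smul_eq_mul, smul_eq_mul, show (1 - t) • x + t • (x + d) = x + t • d by module] at this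
  have hle : f x + G x ≤ f (x + t • d) + G (x + t • d) := hmin (mem_univ _)
  rw [smul_eq_mul, le_inv_mul_iff₀ ht0]
  nlinarith

theorem hasLineDerivAt_sum_sq {ι : Type*} [Fintype ι] (x d : ι → ℝ) :
    HasLineDerivAt ℝ (fun b : ι → ℝ => ∑ j, b j ^ 2) (∑ j, 2 * x j * d j) x d := by
  rw [HasLineDerivAt]
  convert HasDerivAt.fun_sum (u := Finset.univ) fun j _ =>
    (((hasDerivAt_id (0 : ℝ)).mul_const (d j)).const_add (x j)).pow 2 using 1
  · ext t; simp
  · simp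

theorem HasLineDerivAt.le_of_isMinOn_add_of_strongConvex {ι : Type*} [Fintype ι]
    {f g : (ι → ℝ) → ℝ} {f' τ : ℝ} {x d : ι → ℝ} (hf : HasLineDerivAt ℝ f f' x d)
    (hg : ConvexOn ℝ univ fun b => g b - τ / 2 * ∑ j, b j ^ 2) (hmin : IsMinOn (f + g) univ x) :
    g x - f' + τ / 2 * ∑ j, d j ^ 2 ≤ g (x + d) := by
  have hf₂ : HasLineDerivAt ℝ (fun b => f b + τ / 2 * ∑ j, b j ^ 2)
      (f' + τ / 2 * ∑ j, 2 * x j * d j) x d :=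
    HasDerivAt.add hf ((hasLineDerivAt_sum_sq x d).const_mul (τ / 2))
  have key := hf₂.sub_le_of_isMinOn_add hg <| by
    convert hmin using 1
    ext b
    simp only [Pi.add_apply]
    ring
  have hsq : ∑ j, (x + d) j ^ 2 = ∑ j, x j ^ 2 + ∑ j, 2 * x j * d j + ∑ j, d j ^ 2 := by
    simp only [Pi.add_apply, ← Finset.sum_add_distrib]
    exact Finset.sum_congr rfl fun j _ => by ring
  rw [hsq] at key
  linarith

theorem hasLineDerivAt_weighted_loss {ι κ : Type*} [Fintype ι] [Fintype κ] {ρ ψ : ℝ → ℝ}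
    (hρ : ∀ x, HasDerivAt ρ (ψ x) x) (c : ℝ) (ε : ι → ℝ) (X : Matrix ι κ ℝ) (β x d : κ → ℝ) :
    HasLineDerivAt ℝ (fun b => c * ∑ i, ρ (ε i - (X *ᵥ (b - β)) i))
      (-(c * ∑ i, (X *ᵥ d) i * ψ (ε i - (X *ᵥ (x - β)) i))) x d := by
  set r := ε - X *ᵥ (x - β)
  have hline : (fun t : ℝ => c * ∑ i, ρ (ε i - (X *ᵥ (x + t • d - β)) i))
      = fun t => c * ∑ i, ρ (r i - t * (X *ᵥ d) i) := by
    funext t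
    simp only [r, add_sub_right_comm x, mulVec_add, mulVec_smul, Pi.add_apply, Pi.smul_apply,
      Pi.sub_apply, smul_eq_mul, sub_add_eq_sub_sub]
  have hcomp (i : ι) : HasDerivAt (fun t : ℝ => ρ (r i - t * (X *ᵥ d) i))
      (ψ (r i) * -(X *ᵥ d) i) 0 := by
    have hl : HasDerivAt (fun t : ℝ => r i - t * (X *ᵥ d) i) (-(X *ᵥ d) i) 0 := by
      simpa using ((hasDerivAt_id (0 : ℝ)).mul_const ((X *ᵥ d) i)).const_sub (r i)
    exact (hρ (r i)).comp_of_eq 0 hl (by simp)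
  rw [HasLineDerivAt, hline]
  refine ((HasDerivAt.fun_sum fun i _ => hcomp i).const_mul c).congr_deriv ?_
  simp only [r, Pi.sub_apply, mul_neg, neg_mul, Finset.sum_neg_distrib, mul_comm]

theorem weighted_loss_optimality {ι κ : Type*} [Fintype ι] [Fintype κ] {ρ ψ : ℝ → ℝ}
    (hρ : ∀ x, HasDerivAt ρ (ψ x) x) {c τ : ℝ} {g : (κ → ℝ) → ℝ}
    (hg : ConvexOn ℝ univ fun b => g b - τ / 2 * ∑ j, b j ^ 2)
    {ε : ι → ℝ} {X : Matrix ι κ ℝ} {β h : κ → ℝ}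
    (hmin : ∀ b, c * (∑ i, ρ (ε i - (X *ᵥ h) i)) + g (β + h)
        ≤ c * (∑ i, ρ (ε i - (X *ᵥ (b - β)) i)) + g b) (h' : κ → ℝ) :
    g (β + h) + c * ∑ i, (X *ᵥ (h' - h)) i * ψ (ε i - (X *ᵥ h) i)
      + τ / 2 * ∑ j, (h' j - h j) ^ 2 ≤ g (β + h') := by
  have hmin' : IsMinOn ((fun b => c * ∑ i, ρ (ε i - (X *ᵥ (b - β)) i)) + g) univ (β + h) :=
    isMinOn_univ_iff.2 fun b => by simpa only [Pi.add_apply, add_sub_cancel_left] using hmin b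
  have := (hasLineDerivAt_weighted_loss hρ c ε X β (β + h) (h' - h)
    ).le_of_isMinOn_add_of_strongConvex hg hmin'
  simpa only [add_sub_cancel_left, sub_neg_eq_add, add_add_sub_cancel, Pi.sub_apply] using this

theorem perturbation_identity {ι κ : Type*} [Fintype ι] [Fintype κ] (ε εt u ut : ι → ℝ)
    (X Xt : Matrix ι κ ℝ) (h ht : κ → ℝ) :
    ∑ j, (h j - ht j) * ((X - Xt)ᵀ *ᵥ u) j
        + ∑ i, (ε i - εt i + (Xt *ᵥ h) i - (X *ᵥ h) i) * (u i - ut i)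
      = -∑ i, (X *ᵥ (ht - h)) i * u i - ∑ i, (Xt *ᵥ (h - ht)) i * ut i
        + ∑ i, (u i - ut i) * (ε i - (X *ᵥ h) i - (εt i - (Xt *ᵥ ht) i)) := by
  change (h - ht) ⬝ᵥ _ + _ = _
  rw [dotProduct_mulVec, vecMul_transpose, dotProduct_comm]
  simp only [dotProduct, sub_mulVec, mulVec_sub, Pi.sub_apply, ← Finset.sum_neg_distrib,
    ← Finset.sum_add_distrib, ← Finset.sum_sub_distrib]
  exact Finset.sum_congr rfl fun i _ => by ring

theorem stmt17_general {n p : ℕ} (hn : 0 < n)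
    (ρ ψ : ℝ → ℝ) (L : NNReal)
    (hρconv : ConvexOn ℝ Set.univ ρ)
    (hρderiv : ∀ x, HasDerivAt ρ (ψ x) x)
    (hψlip : LipschitzWith L ψ)
    (g : (Fin p → ℝ) → ℝ) (τ : ℝ)
    (hgconv : ConvexOn ℝ Set.univ (fun b => g b - τ / 2 * ∑ j, b j ^ 2))
    (β : Fin p → ℝ)
    (ε εt : Fin n → ℝ) (X Xt : Matrix (Fin n) (Fin p) ℝ)
    (h ht : Fin p → ℝ)
    (hmin : ∀ b : Fin p → ℝ,
      (1 / (n : ℝ)) * (∑ i, ρ (ε i - X.mulVec h i)) + g (β + h)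
        ≤ (1 / (n : ℝ)) * (∑ i, ρ (ε i - X.mulVec (b - β) i)) + g b)
    (hmint : ∀ b : Fin p → ℝ,
      (1 / (n : ℝ)) * (∑ i, ρ (εt i - Xt.mulVec ht i)) + g (β + ht)
        ≤ (1 / (n : ℝ)) * (∑ i, ρ (εt i - Xt.mulVec (b - β) i)) + g b) :
    (n : ℝ) * τ * (∑ j, (h j - ht j) ^ 2)
      + (L : ℝ)⁻¹ * (∑ i, (ψ (ε i - X.mulVec h i) - ψ (εt i - Xt.mulVec ht i)) ^ 2)
      ≤ (∑ j, (h j - ht j) * ((X - Xt)ᵀ.mulVec (fun i => ψ (ε i - X.mulVec h i)) j))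
        + ∑ i, (ε i - εt i + Xt.mulVec h i - X.mulVec h i) *
            (ψ (ε i - X.mulVec h i) - ψ (εt i - Xt.mulVec ht i)) := by
  have hopt := weighted_loss_optimality hρderiv hgconv hmin ht
  have hoptt := weighted_loss_optimality hρderiv hgconv hmint h
  have hsq : ∑ j, (ht j - h j) ^ 2 = ∑ j, (h j - ht j) ^ 2 :=
    Finset.sum_congr rfl fun j _ => by ring
  rw [hsq] at hopt
  have hvar : (n : ℝ) * ((1 / n) * (∑ i, (X *ᵥ (ht - h)) i * ψ (ε i - (X *ᵥ h) i)
      + ∑ i, (Xt *ᵥ (h - ht)) i * ψ (εt i - (Xt *ᵥ ht) i)) + τ * ∑ j, (h j - ht j) ^ 2) ≤ 0 :=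
    mul_nonpos_of_nonneg_of_nonpos n.cast_nonneg (by linarith)
  rw [mul_add, ← mul_assoc, mul_one_div_cancel (Nat.cast_pos.2 hn).ne', one_mul] at hvar
  have hco := hψlip.inv_mul_sum_sq_sub_le_of_monotone (hρconv.monotone_of_hasDerivAt hρderiv)
    (fun i => ε i - (X *ᵥ h) i) (fun i => εt i - (Xt *ᵥ ht) i)
  rw [perturbation_identity ε εt _ (fun i => ψ (εt i - (Xt *ᵥ ht) i))]
  linarith

/-- Basic stability inequality for the regularized M-estimator under perturbations of
`(ε, X)`:
`nτ‖h-h̃‖² + L⁻¹‖ψ̂-ψ̃‖² ≤ (h-h̃)ᵀ(X-X̃)ᵀψ̂ + (ε-ε̃+X̃h-Xh)ᵀ(ψ̂-ψ̃)`. -/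
theorem stmt17 {n p : ℕ} (hn : 0 < n)
    (ρ ψ : ℝ → ℝ) (L : NNReal) (hL : (0 : ℝ) < L)
    (hρconv : ConvexOn ℝ Set.univ ρ)
    (hρderiv : ∀ x, HasDerivAt ρ (ψ x) x)
    (hψlip : LipschitzWith L ψ)
    (g : (Fin p → ℝ) → ℝ) (τ : ℝ) (hτ : 0 < τ)
    (hgconv : ConvexOn ℝ Set.univ (fun b => g b - τ / 2 * ∑ j, b j ^ 2))
    (β : Fin p → ℝ)
    (ε εt : Fin n → ℝ) (X Xt : Matrix (Fin n) (Fin p) ℝ)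
    (h ht : Fin p → ℝ)
    (hmin : ∀ b : Fin p → ℝ,
      (1 / (n : ℝ)) * (∑ i, ρ (ε i - X.mulVec h i)) + g (β + h)
        ≤ (1 / (n : ℝ)) * (∑ i, ρ (ε i - X.mulVec (b - β) i)) + g b)
    (hmint : ∀ b : Fin p → ℝ,
      (1 / (n : ℝ)) * (∑ i, ρ (εt i - Xt.mulVec ht i)) + g (β + ht)
        ≤ (1 / (n : ℝ)) * (∑ i, ρ (εt i - Xt.mulVec (b - β) i)) + g b) :
    (n : ℝ) * τ * (∑ j, (h j - ht j) ^ 2)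
      + (L : ℝ)⁻¹ * (∑ i, (ψ (ε i - X.mulVec h i) - ψ (εt i - Xt.mulVec ht i)) ^ 2)
      ≤ (∑ j, (h j - ht j) * ((X - Xt)ᵀ.mulVec (fun i => ψ (ε i - X.mulVec h i)) j))
        + ∑ i, (ε i - εt i + Xt.mulVec h i - X.mulVec h i) *
            (ψ (ε i - X.mulVec h i) - ψ (εt i - Xt.mulVec ht i)) :=
  stmt17_general hn ρ ψ L hρconv hρderiv hψlip g τ hgconv β ε εt X Xt h ht hmin hmint
end
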